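/- If α and β are equivalence relations on a set A and α ∘_m β = β ∘_m α (where ∘_m denotes the alternating composition α∘β∘α∘… with m−1 occurrences of ∘), then the join of α and β as equivalence relations (i.e. the transitive closure of α ∪ β) equals α ∘_m β. -/

import Mathlib

/-- `AltComp α β m` is the alternating relational composition α∘β∘α∘… with m factors. -/
def AltComp {A : Type*} (α β : A → A → Prop) : ℕ → A → A → Prop
  | 0 => Eq
  | n + 1 => Relation.Comp α (AltComp β α n)

lemma altcomp_refl {A : Type*} :
    ∀ (n : ℕ) (α β : A → A → Prop), (∀ x, α x x) → (∀ x, β x x) →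
      ∀ x, AltComp α β n x x := by
  intro n
  induction n with
  | zero => intro α β _ _ x; rfl
  | succ k ih => intro α β hα hβ x; exact ⟨x, hα x, ih β α hβ hα x⟩

lemma altcomp_subRTG {A : Type*} (r : A → A → Prop) :
    ∀ (n : ℕ) (α β : A → A → Prop), (∀ x y, α x y → r x y) → (∀ x y, β x y → r x y) →
      ∀ x y, AltComp α β n x y → Relation.ReflTransGen r x y := by
  intro n
  induction n with
  | zero => intro α β _ _ x y h; cases h; exact Relation.ReflTransGen.refl
  | succ k ih =>
    rintro α β hαr hβr x y ⟨w, hxw, hwy⟩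
    exact Relation.ReflTransGen.head (hαr _ _ hxw) (ih β α hβr hαr w y hwy)

/-- If α, β are equivalence relations with α ∘_m β = β ∘_m α, then the join of α and β
(the transitive closure of α ∪ β) equals α ∘_m β. -/
theorem stmt6 {A : Type*} (α β : A → A → Prop)
    (hα : Equivalence α) (hβ : Equivalence β)
    (m : ℕ) (hm : 1 ≤ m)
    (hperm : AltComp α β m = AltComp β α m) :
    ∀ a b : A,
      Relation.TransGen (fun x y => α x y ∨ β x y) a b ↔ AltComp α β m a b := by
  obtain ⟨k, rfl⟩ : ∃ k, m = k + 1 := ⟨m - 1, (Nat.succ_pred_eq_of_pos hm).symm⟩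
  -- prepend lemmas
  have prepα : ∀ x w y, α x w → AltComp α β (k + 1) w y → AltComp α β (k + 1) x y := by
    rintro x w y hxw ⟨u, hwu, hrest⟩
    exact ⟨u, hα.trans hxw hwu, hrest⟩
  have prepβ : ∀ x w y, β x w → AltComp α β (k + 1) w y → AltComp α β (k + 1) x y := by
    intro x w y hxw hwy
    rw [hperm] at hwy ⊢
    obtain ⟨u, hwu, hrest⟩ := hwy
    exact ⟨u, hβ.trans hxw hwu, hrest⟩
  intro a b
  constructor
  · intro h
    induction h using Relation.TransGen.head_induction_on with
    | single hstep =>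
      rcases hstep with h | h
      · exact ⟨b, h, altcomp_refl k β α hβ.refl hα.refl b⟩
      · rw [hperm]; exact ⟨b, h, altcomp_refl k α β hα.refl hβ.refl b⟩
    | head hstep _ IH =>
      rcases hstep with h | h
      · exact prepα _ _ _ h IH
      · exact prepβ _ _ _ h IH
  · intro h
    have hrtg := altcomp_subRTG (fun x y => α x y ∨ β x y) (k + 1) α β
      (fun _ _ hh => Or.inl hh) (fun _ _ hh => Or.inr hh) a b h
    rcases (Relation.reflTransGen_iff_eq_or_transGen.mp hrtg) with rfl | htg
    · exact Relation.TransGen.single (Or.inl (hα.refl b))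
    · exact htg
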